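/- Let f, g : [0,1] → ℝ be continuous functions. Then the lower box-counting dimension of the graph of f·g satisfies dim_B_ G(f·g) ≤ max{dim_B_ G(f), dim_B̄ G(g)}. -/

import Mathlib

open Set Filter Metric

noncomputable def coverNum {α : Type*} [PseudoMetricSpace α] (F : Set α) (δ : ℝ) : ℕ :=
  sInf {n : ℕ | ∃ t : Finset α, t.card = n ∧ F ⊆ ⋃ p ∈ t, Metric.closedBall p δ}

noncomputable def upperBoxDim {α : Type*} [PseudoMetricSpace α] (F : Set α) : ℝ :=
  Filter.limsup (fun δ : ℝ => Real.log (coverNum F δ) / -Real.log δ)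
    (nhdsWithin (0 : ℝ) (Set.Ioi 0))

noncomputable def lowerBoxDim {α : Type*} [PseudoMetricSpace α] (F : Set α) : ℝ :=
  Filter.liminf (fun δ : ℝ => Real.log (coverNum F δ) / -Real.log δ)
    (nhdsWithin (0 : ℝ) (Set.Ioi 0))

/-- Graph of `f` over the set `X`. -/
def fnGraphOn (f : ℝ → ℝ) (X : Set ℝ) : Set (ℝ × ℝ) := (fun x => (x, f x)) '' X

/-- Graph of `f` over `[0,1]`. -/
def G (f : ℝ → ℝ) : Set (ℝ × ℝ) := fnGraphOn f (Set.Icc 0 1)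

/-!
Cut `[0, 1]` into columns of width `δ`. By the intermediate value theorem, a `δ`-cover of the graph
of a continuous `h` contains at least about `osc h / (2δ)` squares near a column on which `h`
oscillates by `osc h`; conversely, stacking that many squares on each column covers the graph.
On a column, `fg` oscillates by at most `M (osc f + osc g)` when `|f|, |g| ≤ M`, so
`N_δ(G(fg)) ≤ K (N_δ(G f) + N_δ(G g)) ≤ 2K max (N_δ(G f)) (N_δ(G g))`. After taking logarithms and
dividing by `-log δ`, the ratio for `fg` is at most `o(1)` plus the larger of the ratios for `f`
and `g`; along scales where the ratio for `f` is close to its liminf, the ratio for `g` is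
eventually below its limsup plus `ε`.
-/

open MeasureTheory

/-- `lowerBoxDim F` and `upperBoxDim F` are the liminf and limsup of `coverRatio F` as `δ → 0⁺`. -/
noncomputable def coverRatio {α : Type*} [PseudoMetricSpace α] (F : Set α) (δ : ℝ) : ℝ :=
  Real.log (coverNum F δ) / -Real.log δ

section CoverNum

variable {α : Type*} [PseudoMetricSpace α] {F : Set α} {δ : ℝ}

lemma coverNum_le_card (t : Finset α) (h : F ⊆ ⋃ p ∈ t, closedBall p δ) :
    coverNum F δ ≤ t.card :=
  Nat.sInf_le ⟨t, rfl, h⟩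

lemma IsCompact.exists_card_eq_coverNum (hF : IsCompact F) (hδ : 0 < δ) :
    ∃ t : Finset α, t.card = coverNum F δ ∧ F ⊆ ⋃ p ∈ t, closedBall p δ := by
  obtain ⟨s, -, hs, hcov⟩ := hF.finite_cover_balls hδ
  exact Nat.sInf_mem (s := {n | ∃ t : Finset α, t.card = n ∧ F ⊆ ⋃ p ∈ t, closedBall p δ})
    ⟨_, hs.toFinset, rfl,
      by simpa using hcov.trans (iUnion₂_mono fun _ _ => ball_subset_closedBall)⟩

lemma IsCompact.one_le_coverNum (hF : IsCompact F) (hne : F.Nonempty) (hδ : 0 < δ) :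
    1 ≤ coverNum F δ := by
  obtain ⟨t, ht, hcov⟩ := hF.exists_card_eq_coverNum hδ
  obtain ⟨p, hp, -⟩ := mem_iUnion₂.mp (hcov hne.some_mem)
  exact ht ▸ Finset.card_pos.mpr ⟨p, hp⟩

lemma isBoundedUnder_ge_coverRatio (F : Set α) :
    IsBoundedUnder (· ≥ ·) (nhdsWithin 0 (Ioi 0)) (coverRatio F) :=
  isBoundedUnder_of_eventually_ge <| by
    filter_upwards [Ioo_mem_nhdsGT zero_lt_one] with δ hδ using
      div_nonneg (Real.log_natCast_nonneg _) (neg_nonneg.mpr (Real.log_nonpos hδ.1.le hδ.2.le))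

end CoverNum

lemma log_le_log_two_mul_add_max {n p q K : ℕ} (hn : 0 < n) (h : n ≤ K * (p + q)) :
    Real.log n ≤ Real.log (2 * K) + max (Real.log p) (Real.log q) := by
  have h2 : n ≤ 2 * K * max p q :=
    h.trans (by rw [mul_comm 2 K, mul_assoc]; gcongr; omega)
  obtain ⟨hK, hpq⟩ := CanonicallyOrderedAdd.mul_pos.mp (hn.trans_le h2)
  calc Real.log n ≤ Real.log (2 * K * max p q : ℕ) :=
        Real.log_le_log (by positivity) (by exact_mod_cast h2)
    _ = Real.log (2 * K) + Real.log (max p q : ℕ) := by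
        rw [Nat.cast_mul, Real.log_mul (by exact_mod_cast (by omega : 2 * K ≠ 0))
          (by exact_mod_cast hpq.ne')]
        push_cast
        rfl
    _ ≤ Real.log (2 * K) + max (Real.log p) (Real.log q) := by
        rcases max_choice p q with h | h <;> rw [h] <;> simp

lemma coverRatio_le_of_coverNum_le {α β γ : Type*} [PseudoMetricSpace α] [PseudoMetricSpace β]
    [PseudoMetricSpace γ] {F : Set α} {F₁ : Set β} {F₂ : Set γ} {δ : ℝ} (hδ : δ ∈ Ioo 0 1)
    {K : ℕ} (hF : 0 < coverNum F δ) (h : coverNum F δ ≤ K * (coverNum F₁ δ + coverNum F₂ δ)) :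
    coverRatio F δ ≤ Real.log (2 * K) / -Real.log δ + max (coverRatio F₁ δ) (coverRatio F₂ δ) := by
  have hlog : 0 < -Real.log δ := neg_pos.mpr (Real.log_neg hδ.1 hδ.2)
  rw [coverRatio, coverRatio, coverRatio, max_div_div_right hlog.le, ← add_div]
  exact div_le_div_of_nonneg_right (log_le_log_two_mul_add_max hF h) hlog.le

lemma sub_le_card_mul_of_Icc_subset {ι : Type*} {t : Finset ι} {c : ι → ℝ} {a b δ : ℝ}
    (hδ : 0 ≤ δ) (h : Icc a b ⊆ ⋃ p ∈ t, closedBall (c p) δ) : b - a ≤ t.card * (2 * δ) := by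
  have hvol : volume (Icc a b) ≤ t.card * ENNReal.ofReal (2 * δ) :=
    calc volume (Icc a b) ≤ ∑ p ∈ t, volume (closedBall (c p) δ) :=
          (measure_mono h).trans (measure_biUnion_finset_le t _)
      _ = t.card * ENNReal.ofReal (2 * δ) := by simp [Real.volume_closedBall]
  rw [Real.volume_Icc, ← ENNReal.ofReal_natCast, ← ENNReal.ofReal_mul (by positivity)] at hvol
  exact (ENNReal.ofReal_le_ofReal_iff (by positivity)).mp hvol

lemma Icc_subset_biUnion_closedBall (a : ℝ) {δ : ℝ} (hδ : 0 < δ) (k : ℕ) :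
    Icc a (a + 2 * δ * k) ⊆ ⋃ r ∈ Finset.range (k + 1), closedBall (a + 2 * δ * r) δ := by
  intro y hy
  set s := (y - a) / (2 * δ) + 1 / 2
  have hs : s * (2 * δ) = y - a + δ := by
    simp only [s, add_mul, div_mul_cancel₀ _ (by positivity : 2 * δ ≠ 0)]; ring
  have hr₁ : (⌊s⌋₊ : ℝ) * (2 * δ) ≤ y - a + δ := hs ▸ by
    gcongr; exact Nat.floor_le (by have := hy.1; positivity)
  have hr₂ : y - a + δ < (⌊s⌋₊ + 1) * (2 * δ) := hs ▸ by gcongr; exact Nat.lt_floor_add_one s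
  refine mem_iUnion₂.mpr ⟨⌊s⌋₊, Finset.mem_range.mpr ?_, ?_⟩
  · have : (⌊s⌋₊ : ℝ) < k + 1 := by
      by_contra! hk
      nlinarith [hy.2]
    exact_mod_cast this
  · rw [mem_closedBall, Real.dist_eq, abs_le]
    constructor <;> linarith

lemma card_le_add_one_of_forall_le_add {s : Finset ℕ} {d : ℕ}
    (h : ∀ i ∈ s, ∀ j ∈ s, j ≤ i + d) : s.card ≤ d + 1 := by
  rcases s.eq_empty_or_nonempty with rfl | hs
  · simp
  calc s.card ≤ (Finset.Icc (s.min' hs) (s.min' hs + d)).card :=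
        Finset.card_le_card fun j hj =>
          Finset.mem_Icc.mpr ⟨s.min'_le j hj, h _ (s.min'_mem hs) j hj⟩
    _ = d + 1 := by simp; omega

lemma abs_mul_sub_mul_le (a b c d : ℝ) : |a * b - c * d| ≤ |a| * |b - d| + |d| * |a - c| :=
  calc |a * b - c * d| = |a * (b - d) + d * (a - c)| := by ring_nf
    _ ≤ |a| * |b - d| + |d| * |a - c| := (abs_add_le _ _).trans_eq (by rw [abs_mul, abs_mul])

section Graph

variable {f g h : ℝ → ℝ} {δ : ℝ}

def column (δ : ℝ) (i : ℕ) : Set ℝ := Icc (i * δ) ((i + 1) * δ)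

lemma exists_mem_column (hδ : 0 < δ) {m : ℕ} (hm : 1 ≤ m * δ) {x : ℝ}
    (hx : x ∈ Icc (0 : ℝ) 1) : ∃ i < m, x ∈ column δ i := by
  have hm0 : 0 < m := Nat.pos_of_ne_zero fun hm0 => by simp [hm0] at hm; linarith
  have hxδ : x / δ * δ = x := div_mul_cancel₀ x hδ.ne'
  refine ⟨min ⌊x / δ⌋₊ (m - 1), by omega, ?_, ?_⟩
  · calc ((min ⌊x / δ⌋₊ (m - 1) : ℕ) : ℝ) * δ ≤ ⌊x / δ⌋₊ * δ := by gcongr; exact min_le_left _ _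
      _ ≤ x / δ * δ := by gcongr; exact Nat.floor_le (div_nonneg hx.1 hδ.le)
      _ = x := hxδ
  · rcases le_total ⌊x / δ⌋₊ (m - 1) with hle | hle
    · rw [min_eq_left hle]
      calc x = x / δ * δ := hxδ.symm
        _ ≤ (⌊x / δ⌋₊ + 1) * δ := by gcongr; exact (Nat.lt_floor_add_one _).le
    · rw [min_eq_right hle, Nat.cast_sub hm0, Nat.cast_one, sub_add_cancel]
      exact hx.2.trans hm

lemma isCompact_G (hh : ContinuousOn h (Icc 0 1)) : IsCompact (G h) :=
  isCompact_Icc.image_of_continuousOn (continuousOn_id.prodMk hh)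

lemma nonempty_G (h : ℝ → ℝ) : (G h).Nonempty :=
  ⟨(0, h 0), 0, by simp, rfl⟩

lemma exists_nat_abs_le (hh : ContinuousOn h (Icc 0 1)) :
    ∃ M : ℕ, ∀ x ∈ Icc (0 : ℝ) 1, |h x| ≤ M := by
  obtain ⟨C, hC⟩ := isCompact_Icc.exists_bound_of_continuousOn hh
  exact ⟨⌈C⌉₊, fun x hx => (hC x hx).trans (Nat.le_ceil C)⟩

lemma left_mem_column (hδ : 0 < δ) {i : ℕ} (hi : i < ⌈δ⁻¹⌉₊) :
    (i : ℝ) * δ ∈ Icc 0 1 ∩ column δ i := by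
  have : (i : ℝ) < δ⁻¹ := Nat.lt_ceil.mp hi
  refine ⟨⟨by positivity, ?_⟩, le_rfl, by gcongr; linarith⟩
  calc (i : ℝ) * δ ≤ δ⁻¹ * δ := by gcongr
    _ = 1 := inv_mul_cancel₀ hδ.ne'

lemma one_le_ceil_inv_mul (hδ : 0 < δ) : 1 ≤ (⌈δ⁻¹⌉₊ : ℝ) * δ :=
  calc 1 = δ⁻¹ * δ := (inv_mul_cancel₀ hδ.ne').symm
    _ ≤ ⌈δ⁻¹⌉₊ * δ := by gcongr; exact Nat.le_ceil _

/-- Each column is covered by squares of side `2δ` centred on the column's axis and stacked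
above `h (i * δ) - 2 * δ * n i`. -/
lemma coverNum_G_le_sum (hδ : 0 < δ) {m : ℕ} (hm : 1 ≤ m * δ) (n : ℕ → ℕ)
    (hosc : ∀ i < m, ∀ x ∈ Icc 0 1 ∩ column δ i, |h x - h (i * δ)| ≤ 2 * δ * n i) :
    coverNum (G h) δ ≤ ∑ i ∈ Finset.range m, (2 * n i + 1) := by
  let t : Finset (ℝ × ℝ) := (Finset.range m).biUnion fun i =>
    (Finset.range (2 * n i + 1)).image fun r : ℕ =>
      ((i + 1 / 2) * δ, h (i * δ) - 2 * δ * n i + 2 * δ * r)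
  refine (coverNum_le_card t ?_).trans <| Finset.card_biUnion_le.trans <|
    Finset.sum_le_sum fun i _ => Finset.card_image_le.trans (Finset.card_range _).le
  rintro _ ⟨x, hx, rfl⟩
  obtain ⟨i, hi, hxi⟩ := exists_mem_column hδ hm hx
  have hy : h x ∈ Icc (h (i * δ) - 2 * δ * n i)
      (h (i * δ) - 2 * δ * n i + 2 * δ * (2 * n i : ℕ)) := by
    have := abs_le.mp (hosc i hi x ⟨hx, hxi⟩)
    push_cast
    constructor <;> linarith
  obtain ⟨r, hr, hyr⟩ := mem_iUnion₂.mp (Icc_subset_biUnion_closedBall _ hδ _ hy)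
  refine mem_iUnion₂.mpr ⟨_, Finset.mem_biUnion.mpr
    ⟨i, Finset.mem_range.mpr hi, Finset.mem_image_of_mem _ hr⟩, ?_⟩
  rw [← closedBall_prod_same]
  refine ⟨?_, hyr⟩
  rw [mem_closedBall, Real.dist_eq, abs_le]
  constructor <;> linarith [hxi.1, hxi.2]

noncomputable def nearColumn (t : Finset (ℝ × ℝ)) (δ : ℝ) (i : ℕ) : Finset (ℝ × ℝ) :=
  t.filter fun p => p.1 ∈ Icc (((i : ℝ) - 1) * δ) ((i + 2) * δ)

/-- By the intermediate value theorem the cover must reach every height between `h x` and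
`h y` above the column, using only squares within `δ` of it. -/
lemma abs_sub_le_card_nearColumn (hh : ContinuousOn h (Icc 0 1)) (hδ : 0 ≤ δ)
    {t : Finset (ℝ × ℝ)} (hcov : G h ⊆ ⋃ p ∈ t, closedBall p δ) {i : ℕ} {x y : ℝ}
    (hx : x ∈ Icc 0 1 ∩ column δ i) (hy : y ∈ Icc 0 1 ∩ column δ i) :
    |h x - h y| ≤ (nearColumn t δ i).card * (2 * δ) := by
  have hsub : uIcc x y ⊆ Icc 0 1 ∩ column δ i :=
    (ordConnected_Icc.inter ordConnected_Icc).uIcc_subset hx hy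
  rw [← max_sub_min_eq_abs']
  refine sub_le_card_mul_of_Icc_subset (c := Prod.snd) hδ fun z hz => ?_
  obtain ⟨w, hw, rfl⟩ := intermediate_value_uIcc (hh.mono (hsub.trans inter_subset_left)) hz
  obtain ⟨p, hp, hd⟩ := mem_iUnion₂.mp (hcov ⟨w, (hsub hw).1, rfl⟩)
  rw [← closedBall_prod_same] at hd
  refine mem_iUnion₂.mpr ⟨p, Finset.mem_filter.mpr ⟨hp, ?_⟩, hd.2⟩
  have hwi := (hsub hw).2
  have hd₁ := hd.1
  rw [mem_closedBall, Real.dist_eq, abs_le] at hd₁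
  constructor <;> linarith [hwi.1, hwi.2]

lemma sum_card_nearColumn_le (t : Finset (ℝ × ℝ)) (hδ : 0 < δ) (m : ℕ) :
    ∑ i ∈ Finset.range m, (nearColumn t δ i).card ≤ 4 * t.card := by
  classical
  calc ∑ i ∈ Finset.range m, (nearColumn t δ i).card
      = ∑ p ∈ t, ((Finset.range m).filter
          fun i : ℕ => p.1 ∈ Icc (((i : ℝ) - 1) * δ) ((i + 2) * δ)).card := by
        simp only [nearColumn, Finset.card_filter]
        exact Finset.sum_comm
    _ ≤ ∑ _p ∈ t, 4 := Finset.sum_le_sum fun p _ => card_le_add_one_of_forall_le_add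
        fun i hi j hj => by
          have hi := (Finset.mem_filter.mp hi).2
          have hj := (Finset.mem_filter.mp hj).2
          have : ((j : ℝ) - 1) * δ ≤ (i + 2) * δ := hj.1.trans hi.2
          have : (j : ℝ) ≤ i + 3 := by linarith [le_of_mul_le_mul_right this hδ]
          exact_mod_cast this
    _ = 4 * t.card := by rw [Finset.sum_const, smul_eq_mul, mul_comm]

/-- The squares of a cover of `G h` project onto intervals covering `[0, 1]`. -/
lemma ceil_inv_le_two_mul_card (hδ : 0 < δ) {t : Finset (ℝ × ℝ)}
    (hcov : G h ⊆ ⋃ p ∈ t, closedBall p δ) : ⌈δ⁻¹⌉₊ ≤ 2 * t.card := by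
  have hlen : (1 : ℝ) - 0 ≤ t.card * (2 * δ) := by
    refine sub_le_card_mul_of_Icc_subset (c := Prod.fst) hδ.le fun x hx => ?_
    obtain ⟨p, hp, hd⟩ := mem_iUnion₂.mp (hcov ⟨x, hx, rfl⟩)
    rw [← closedBall_prod_same] at hd
    exact mem_iUnion₂.mpr ⟨p, hp, hd.1⟩
  refine Nat.ceil_le.mpr ?_
  calc δ⁻¹ ≤ δ⁻¹ * (t.card * (2 * δ)) := le_mul_of_one_le_right (by positivity) (by linarith)
    _ = ((2 * t.card : ℕ) : ℝ) := by push_cast; field_simp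

lemma coverNum_G_mul_le (hf : ContinuousOn f (Icc 0 1)) (hg : ContinuousOn g (Icc 0 1)) {M : ℕ}
    (hMf : ∀ x ∈ Icc (0 : ℝ) 1, |f x| ≤ M) (hMg : ∀ x ∈ Icc (0 : ℝ) 1, |g x| ≤ M)
    (hδ : 0 < δ) :
    coverNum (G (f * g)) δ ≤ (8 * M + 2) * (coverNum (G f) δ + coverNum (G g) δ) := by
  obtain ⟨tf, htf, hcovf⟩ := (isCompact_G hf).exists_card_eq_coverNum hδ
  obtain ⟨tg, htg, hcovg⟩ := (isCompact_G hg).exists_card_eq_coverNum hδ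
  let kf i := (nearColumn tf δ i).card
  let kg i := (nearColumn tg δ i).card
  have hosc : ∀ i < ⌈δ⁻¹⌉₊, ∀ x ∈ Icc 0 1 ∩ column δ i,
      |(f * g) x - (f * g) (i * δ)| ≤ 2 * δ * (M * (kf i + kg i) : ℕ) := by
    intro i hi x hx
    have hi := left_mem_column hδ hi
    calc |(f * g) x - (f * g) (i * δ)|
        ≤ |f x| * |g x - g (i * δ)| + |g (i * δ)| * |f x - f (i * δ)| := abs_mul_sub_mul_le ..
      _ ≤ M * (kg i * (2 * δ)) + M * (kf i * (2 * δ)) := by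
        gcongr
        exacts [hMf x hx.1, abs_sub_le_card_nearColumn hg hδ.le hcovg hx hi, hMg _ hi.1,
          abs_sub_le_card_nearColumn hf hδ.le hcovf hx hi]
      _ = 2 * δ * (M * (kf i + kg i) : ℕ) := by push_cast; ring
  calc coverNum (G (f * g)) δ
      ≤ ∑ i ∈ Finset.range ⌈δ⁻¹⌉₊, (2 * (M * (kf i + kg i)) + 1) :=
        coverNum_G_le_sum hδ (one_le_ceil_inv_mul hδ) _ hosc
    _ = 2 * M * ∑ i ∈ Finset.range ⌈δ⁻¹⌉₊, kf i + 2 * M * ∑ i ∈ Finset.range ⌈δ⁻¹⌉₊, kg i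
          + ⌈δ⁻¹⌉₊ := by
        simp only [mul_add, Finset.sum_add_distrib, ← Finset.mul_sum, Finset.sum_const,
          Finset.card_range, smul_eq_mul, mul_one]
        ring
    _ ≤ 2 * M * (4 * tf.card) + 2 * M * (4 * tg.card) + 2 * tf.card := by
        gcongr
        exacts [sum_card_nearColumn_le tf hδ _, sum_card_nearColumn_le tg hδ _,
          ceil_inv_le_two_mul_card hδ hcovf]
    _ ≤ (8 * M + 2) * (coverNum (G f) δ + coverNum (G g) δ) := by
        rw [htf, htg]
        nlinarith

lemma exists_coverNum_G_mul_le (hf : ContinuousOn f (Icc 0 1)) (hg : ContinuousOn g (Icc 0 1)) :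
    ∃ K : ℕ, ∀ ⦃δ : ℝ⦄, 0 < δ →
      coverNum (G (f * g)) δ ≤ K * (coverNum (G f) δ + coverNum (G g) δ) := by
  obtain ⟨Mf, hMf⟩ := exists_nat_abs_le hf
  obtain ⟨Mg, hMg⟩ := exists_nat_abs_le hg
  refine ⟨8 * max Mf Mg + 2, fun δ hδ => coverNum_G_mul_le hf hg ?_ ?_ hδ⟩
  exacts [fun x hx => (hMf x hx).trans (by exact_mod_cast le_max_left _ _),
    fun x hx => (hMg x hx).trans (by exact_mod_cast le_max_right _ _)]

lemma coverNum_G_le {M : ℕ} (hM : ∀ x ∈ Icc (0 : ℝ) 1, |h x| ≤ M)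
    (hδ : 0 < δ) (hδ₁ : δ ≤ 1) : (coverNum (G h) δ : ℝ) ≤ (4 * M + 6) * δ⁻¹ ^ 2 := by
  have hinv : 1 ≤ δ⁻¹ := one_le_inv₀ hδ |>.mpr hδ₁
  set n := ⌈M * δ⁻¹⌉₊
  have hn : (M : ℝ) ≤ δ * n :=
    calc (M : ℝ) = δ * (M * δ⁻¹) := by field_simp
      _ ≤ δ * n := by gcongr; exact Nat.le_ceil _
  have hcover := coverNum_G_le_sum (h := h) hδ (one_le_ceil_inv_mul hδ) (fun _ => n)
    fun i hi x hx => by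
      have := hM x hx.1
      have := hM _ (left_mem_column hδ hi).1
      linarith [abs_sub (h x) (h (i * δ))]
  rw [Finset.sum_const, Finset.card_range, smul_eq_mul] at hcover
  calc (coverNum (G h) δ : ℝ) ≤ ⌈δ⁻¹⌉₊ * (2 * n + 1) := by exact_mod_cast hcover
    _ ≤ (2 * δ⁻¹) * ((2 * M + 3) * δ⁻¹) := by
        gcongr
        · linarith [Nat.ceil_lt_add_one (inv_nonneg.mpr hδ.le)]
        · nlinarith [Nat.ceil_lt_add_one (by positivity : 0 ≤ (M : ℝ) * δ⁻¹)]
    _ = (4 * M + 6) * δ⁻¹ ^ 2 := by ring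

lemma isBoundedUnder_le_coverRatio_G (hh : ContinuousOn h (Icc 0 1)) :
    IsBoundedUnder (· ≤ ·) (nhdsWithin 0 (Ioi 0)) (coverRatio (G h)) := by
  obtain ⟨M, hM⟩ := exists_nat_abs_le hh
  refine isBoundedUnder_of_eventually_le (a := 3) ?_
  have hC : (0 : ℝ) < 4 * M + 6 := by positivity
  filter_upwards [Ioo_mem_nhdsGT (inv_pos.mpr hC)] with δ hδ
  have hC' : (4 * M + 6 : ℝ) ≤ δ⁻¹ := (le_inv_comm₀ hδ.1 hC).mp hδ.2.le
  have hδ₁ : δ < 1 := hδ.2.trans_le (inv_le_one_of_one_le₀ (by linarith))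
  have hlog : 0 < -Real.log δ := neg_pos.mpr (Real.log_neg hδ.1 hδ₁)
  have hN : (coverNum (G h) δ : ℝ) ≤ δ⁻¹ ^ 3 :=
    calc (coverNum (G h) δ : ℝ) ≤ (4 * M + 6) * δ⁻¹ ^ 2 := coverNum_G_le hM hδ.1 hδ₁.le
      _ ≤ δ⁻¹ * δ⁻¹ ^ 2 := by gcongr
      _ = δ⁻¹ ^ 3 := by ring
  have hpos : (0 : ℝ) < coverNum (G h) δ := by
    exact_mod_cast (isCompact_G hh).one_le_coverNum (nonempty_G h) hδ.1
  rw [coverRatio, div_le_iff₀ hlog]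
  calc Real.log (coverNum (G h) δ) ≤ Real.log (δ⁻¹ ^ 3) := Real.log_le_log hpos hN
    _ = 3 * -Real.log δ := by rw [Real.log_pow, Real.log_inv]; push_cast; ring

end Graph

lemma liminf_le_max_liminf_limsup_of_le_add {ι : Type*} {l : Filter ι} {u a b c : ι → ℝ}
    (hc : Tendsto c l (nhds 0)) (h : ∀ᶠ x in l, u x ≤ c x + max (a x) (b x))
    (hu : IsBoundedUnder (· ≥ ·) l u) (ha : IsCoboundedUnder (· ≥ ·) l a)
    (hb : IsBoundedUnder (· ≤ ·) l b) : liminf u l ≤ max (liminf a l) (limsup b l) := by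
  refine le_of_forall_pos_le_add fun ε hε => liminf_le_of_frequently_le ?_ hu
  have ha' : ∃ᶠ x in l, a x < liminf a l + ε / 2 := frequently_lt_of_liminf_lt ha (by linarith)
  have hb' : ∀ᶠ x in l, b x < limsup b l + ε / 2 := eventually_lt_of_limsup_lt (by linarith) hb
  have hc' : ∀ᶠ x in l, c x < ε / 2 := hc.eventually_lt_const (by linarith)
  refine (ha'.and_eventually (hb'.and (hc'.and h))).mono fun x ⟨hax, hbx, hcx, hx⟩ => ?_
  have := max_le_max hax.le hbx.le
  rw [max_add_add_right] at this
  linarith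

theorem lowerBoxDim_graph_mul_le (f g : ℝ → ℝ)
    (hf : ContinuousOn f (Set.Icc 0 1)) (hg : ContinuousOn g (Set.Icc 0 1)) :
    lowerBoxDim (G (f * g)) ≤ max (lowerBoxDim (G f)) (upperBoxDim (G g)) := by
  obtain ⟨K, hK⟩ := exists_coverNum_G_mul_le hf hg
  have hlog : Tendsto (fun δ => -Real.log δ) (nhdsWithin 0 (Ioi 0)) atTop :=
    tendsto_neg_atBot_atTop.comp Real.tendsto_log_nhdsGT_zero
  refine liminf_le_max_liminf_limsup_of_le_add (c := fun δ => Real.log (2 * K) / -Real.log δ)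
    (tendsto_const_nhds.div_atTop hlog) ?_ (isBoundedUnder_ge_coverRatio _)
    (isBoundedUnder_le_coverRatio_G hf).isCoboundedUnder_ge (isBoundedUnder_le_coverRatio_G hg)
  filter_upwards [Ioo_mem_nhdsGT zero_lt_one] with δ hδ
  exact coverRatio_le_of_coverNum_le hδ
    ((isCompact_G (hf.mul hg)).one_le_coverNum (nonempty_G _) hδ.1) (hK hδ.1)
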